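/- arXiv:1111.4616 — 10 statements merged into one kernel-verified Lean document; each statement's English description precedes it below -/
import Mathlib

section
/- For every real α > 0, the function A ↦ -(det A)^(-α/2) is concave on the set of symmetric positive definite 2×2 real matrices; equivalently, A ↦ (det A)^(-α/2) is convex on this set. -/
/-!
On `2 × 2` positive definite matrices `A ↦ √(det A)` is concave (Minkowski's determinant
inequality, which in dimension two reduces to a sum-of-squares identity), and `x ↦ x ^ (-α)` is
convex and decreasing on `(0, ∞)`. Hence `(det A) ^ (-α / 2) = (√(det A)) ^ (-α)` is convex.
-/

open Set Real

theorem ConvexOn.comp_concaveOn_of_mapsTo {𝕜 E β γ : Type*} [Semiring 𝕜] [PartialOrder 𝕜]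
    [AddCommMonoid E] [AddCommMonoid β] [PartialOrder β] [AddCommMonoid γ] [PartialOrder γ]
    [SMul 𝕜 E] [SMul 𝕜 β] [SMul 𝕜 γ] {s : Set E} {t : Set β} {f : E → β} {g : β → γ}
    (hg : ConvexOn 𝕜 t g) (hf : ConcaveOn 𝕜 s f) (hg' : AntitoneOn g t) (hst : MapsTo f s t) :
    ConvexOn 𝕜 s (g ∘ f) :=
  ⟨hf.1, fun _ hx _ hy _ _ ha hb hab =>
    (hg' (hg.1 (hst hx) (hst hy) ha hb hab) (hst (hf.1 hx hy ha hb hab))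
      (hf.2 hx hy ha hb hab)).trans (hg.2 (hst hx) (hst hy) ha hb hab)⟩

theorem convexOn_rpow_of_nonpos {p : ℝ} (hp : p ≤ 0) : ConvexOn ℝ (Ioi 0) fun x : ℝ ↦ x ^ p := by
  have hexp : ConvexOn ℝ univ fun y ↦ exp (p * y) :=
    convexOn_exp.comp_linearMap (LinearMap.mul ℝ ℝ p)
  have hanti : AntitoneOn (fun y ↦ exp (p * y)) univ := fun x _ y _ hxy ↦
    exp_le_exp.2 (mul_le_mul_of_nonpos_left hxy hp)
  refine (hexp.comp_concaveOn_of_mapsTo strictConcaveOn_log_Ioi.concaveOn hanti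
    (mapsTo_univ _ _)).congr fun x hx ↦ ?_
  simp [rpow_def_of_pos (mem_Ioi.1 hx), mul_comm]

namespace Matrix

theorem convex_setOf_posDef {n : Type*} [Fintype n] :
    Convex ℝ {A : Matrix n n ℝ | A.PosDef} :=
  convex_iff_forall_pos.2 fun _ hA _ hB _ _ ha hb _ ↦ (hA.smul ha).add (hB.smul hb)

theorem sqrt_det_smul_fin_two (A : Matrix (Fin 2) (Fin 2) ℝ) {c : ℝ} (hc : 0 ≤ c) :
    √(c • A).det = c * √A.det := by
  rw [det_smul, Fintype.card_fin, sqrt_mul (sq_nonneg c), sqrt_sq hc]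

theorem PosDef.sqrt_det_add_sqrt_det_le {A B : Matrix (Fin 2) (Fin 2) ℝ} (hA : A.PosDef)
    (hB : B.PosDef) : √A.det + √B.det ≤ √(A + B).det := by
  have hA₁₀ : A 1 0 = A 0 1 := by simpa using hA.1.apply 0 1
  have hB₁₀ : B 1 0 = B 0 1 := by simpa using hB.1.apply 0 1
  have hA₀₀ : 0 < A 0 0 := hA.diag_pos
  have hB₀₀ : 0 < B 0 0 := hB.diag_pos
  have hpA := hA.det_pos
  have hpB := hB.det_pos
  set p := √A.det
  set q := √B.det
  have hp : p ^ 2 = A 0 0 * A 1 1 - A 0 1 ^ 2 := by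
    rw [sq_sqrt hpA.le, det_fin_two, hA₁₀]; ring
  have hq : q ^ 2 = B 0 0 * B 1 1 - B 0 1 ^ 2 := by
    rw [sq_sqrt hpB.le, det_fin_two, hB₁₀]; ring
  -- after multiplying by `A 0 0 * B 0 0 > 0` the gap is a sum of squares
  have hmixed : 2 * (p * q) ≤ A 0 0 * B 1 1 + B 0 0 * A 1 1 - 2 * (A 0 1 * B 0 1) := by
    have hsos : A 0 0 * B 0 0 * (A 0 0 * B 1 1 + B 0 0 * A 1 1 - 2 * (A 0 1 * B 0 1) - 2 * (p * q))
        = (A 0 0 * q - B 0 0 * p) ^ 2 + (A 0 0 * B 0 1 - B 0 0 * A 0 1) ^ 2 := by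
      linear_combination (-(A 0 0) ^ 2) * hq + (-(B 0 0) ^ 2) * hp
    have := (mul_nonneg_iff_of_pos_left (mul_pos hA₀₀ hB₀₀)).1 (by rw [hsos]; positivity)
    linarith
  rw [le_sqrt (by positivity) (hA.add hB).det_pos.le, det_fin_two]
  simp only [add_apply, hA₁₀, hB₁₀]
  linear_combination hmixed + hp + hq

theorem concaveOn_sqrt_det_fin_two :
    ConcaveOn ℝ {A : Matrix (Fin 2) (Fin 2) ℝ | A.PosDef} fun A ↦ √A.det := by
  refine concaveOn_iff_forall_pos.2 ⟨convex_setOf_posDef, fun A hA B hB a b ha hb _ ↦ ?_⟩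
  simpa only [sqrt_det_smul_fin_two, ha.le, hb.le, smul_eq_mul] using
    (hA.smul ha).sqrt_det_add_sqrt_det_le (hB.smul hb)

end Matrix

/-- For every real `α > 0`, the function `A ↦ -(det A)^(-α/2)` is concave on the
set of symmetric positive definite `2×2` real matrices. -/
theorem speed_concave_on_posDef (α : ℝ) (hα : 0 < α) :
    ConcaveOn ℝ {A : Matrix (Fin 2) (Fin 2) ℝ | A.IsSymm ∧ A.PosDef}
      (fun A => -(A.det ^ (-(α / 2)) : ℝ)) := by
  have hset : {A : Matrix (Fin 2) (Fin 2) ℝ | A.IsSymm ∧ A.PosDef} = {A | A.PosDef} :=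
    ext fun A ↦ ⟨And.right, fun hA ↦ ⟨Matrix.isHermitian_iff_isSymm.1 hA.1, hA⟩⟩
  have hanti : AntitoneOn (fun x : ℝ ↦ x ^ (-α)) (Ioi 0) := fun x hx y _ hxy ↦
    rpow_le_rpow_of_nonpos hx hxy (by linarith)
  have hconvex := (convexOn_rpow_of_nonpos (by linarith)).comp_concaveOn_of_mapsTo
    Matrix.concaveOn_sqrt_det_fin_two hanti fun A hA ↦ sqrt_pos.2 (Matrix.PosDef.det_pos hA)
  rw [hset]
  refine (hconvex.congr fun A hA ↦ ?_).neg
  rw [Function.comp_apply, sqrt_eq_rpow, ← rpow_mul (Matrix.PosDef.det_pos hA).le]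
  ring_nf
end

section
/- Q1/α is a quadratic function of α with non-negative leading coefficient: for all real numbers 0 < r1 < r2, there exist real numbers a, b, c (depending only on r1 and r2) with c ≥ 0 such that for every real α > 0, (r1*r2)^(2α) * Q1(α, r1, r2) = α*(a + b*α + c*α^2). Here Q1(α, r1, r2) = f*H + 2*f*(f1 + f2)*( f^2/(r2 - r1) - 2*f*f1 - f1*f2*(r2 - r1) ), where f = -(r1*r2)^(-α/2), f1 = (α/2)*(r1*r2)^(-α/2)/r1, f2 = (α/2)*(r1*r2)^(-α/2)/r2, f11 = -(α/2)*(α/2 + 1)*(r1*r2)^(-α/2)/r1^2, f22 = -(α/2)*(α/2 + 1)*(r1*r2)^(-α/2)/r2^2, f12 = -(α^2/4)*(r1*r2)^(-α/2)/(r1*r2), g1 = f - f1*(r2 - r1), g2 = -f - f2*(r2 - r1), and H = f11*g2^2 - 2*f12*g1*g2 + f22*g1^2. -/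
/-- The speed `f = -(r1*r2)^(-α/2)` for the flow by `K^(α/2)`. -/
noncomputable def fK (α r1 r2 : ℝ) : ℝ := -((r1 * r2) ^ (-(α / 2)))

/-- First partial derivative of `f` in `r1`. -/
noncomputable def f1K (α r1 r2 : ℝ) : ℝ := α / 2 * (r1 * r2) ^ (-(α / 2)) / r1

/-- First partial derivative of `f` in `r2`. -/
noncomputable def f2K (α r1 r2 : ℝ) : ℝ := α / 2 * (r1 * r2) ^ (-(α / 2)) / r2

/-- Second partial derivative of `f` in `r1, r1`. -/
noncomputable def f11K (α r1 r2 : ℝ) : ℝ :=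
  -(α / 2) * (α / 2 + 1) * (r1 * r2) ^ (-(α / 2)) / r1 ^ 2

/-- Second partial derivative of `f` in `r2, r2`. -/
noncomputable def f22K (α r1 r2 : ℝ) : ℝ :=
  -(α / 2) * (α / 2 + 1) * (r1 * r2) ^ (-(α / 2)) / r2 ^ 2

/-- Second partial derivative of `f` in `r1, r2`. -/
noncomputable def f12K (α r1 r2 : ℝ) : ℝ :=
  -(α ^ 2 / 4) * (r1 * r2) ^ (-(α / 2)) / (r1 * r2)

/-- `g1 = f - f1*(r2 - r1)`, a derivative of the pinching quantity. -/
noncomputable def g1K (α r1 r2 : ℝ) : ℝ := fK α r1 r2 - f1K α r1 r2 * (r2 - r1)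

/-- `g2 = -f - f2*(r2 - r1)`, a derivative of the pinching quantity. -/
noncomputable def g2K (α r1 r2 : ℝ) : ℝ := -fK α r1 r2 - f2K α r1 r2 * (r2 - r1)

/-- `H = f11*g2^2 - 2*f12*g1*g2 + f22*g1^2`, the Hessian of `f` on `(g2, -g1)`. -/
noncomputable def HK (α r1 r2 : ℝ) : ℝ :=
  f11K α r1 r2 * g2K α r1 r2 ^ 2 - 2 * f12K α r1 r2 * g1K α r1 r2 * g2K α r1 r2 +
    f22K α r1 r2 * g1K α r1 r2 ^ 2

/-- The gradient coefficient `Q1` for the flow by `K^(α/2)`. -/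
noncomputable def Q1K (α r1 r2 : ℝ) : ℝ :=
  fK α r1 r2 * HK α r1 r2 +
    2 * fK α r1 r2 * (f1K α r1 r2 + f2K α r1 r2) *
      (fK α r1 r2 ^ 2 / (r2 - r1) - 2 * fK α r1 r2 * f1K α r1 r2 -
        f1K α r1 r2 * f2K α r1 r2 * (r2 - r1))

/-- `Q1/α` is a quadratic function of `α` with non-negative leading coefficient. -/
theorem Q1_quadratic_in_alpha (r1 r2 : ℝ) (hr1 : 0 < r1) (hr12 : r1 < r2) :
    ∃ a b c : ℝ, 0 ≤ c ∧ ∀ α : ℝ, 0 < α →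
      (r1 * r2) ^ (2 * α) * Q1K α r1 r2 = α * (a + b * α + c * α ^ 2) := by
  have hr2 : 0 < r2 := hr1.trans hr12
  have hd : r2 - r1 ≠ 0 := by nlinarith
  have h1 : r1 ≠ 0 := hr1.ne'
  have h2 : r2 ≠ 0 := hr2.ne'
  refine ⟨((1/2)*r2/r1^2 - (3/2)/r1 - (1/2)/r2 - (1/2)*r1/r2^2)/(r2-r1),
    (-(5/4)*r2/r1^2 + (7/4)/r1 - (3/4)/r2 + (1/4)*r1/r2^2)/(r2-r1),
    (r2-r1)/(2*r1^2*r2), ?_, ?_⟩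
  · have : 0 ≤ r2 - r1 := by linarith
    positivity
  · intro α hα
    set t : ℝ := (r1 * r2) ^ (-(α / 2)) with ht
    have htpos : 0 < t := Real.rpow_pos_of_pos (by positivity) _
    have hkey : (r1 * r2) ^ (2 * α) * t ^ 4 = 1 := by
      rw [ht, ← Real.rpow_natCast ((r1*r2) ^ (-(α/2))) 4,
        ← Real.rpow_mul (by positivity), ← Real.rpow_add (by positivity)]
      rw [show 2 * α + -(α / 2) * ((4:ℕ):ℝ) = 0 by push_cast; ring, Real.rpow_zero]
    have hkey2 : (r1 * r2) ^ (2 * α) = (t ^ 4)⁻¹ := by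
      field_simp at hkey ⊢
      linarith [hkey]
    rw [hkey2]
    unfold Q1K HK fK f1K f2K f11K f22K f12K g1K g2K fK f1K f2K
    rw [← ht]
    field_simp
    ring
end

section
/- Q2/α is a quadratic function of α with non-negative leading coefficient: for all real numbers 0 < r1 < r2, there exist real numbers a, b, c (depending only on r1 and r2) with c ≥ 0 such that for every real α > 0, (r1*r2)^(2α) * Q2(α, r1, r2) = α*(a + b*α + c*α^2). Here Q2(α, r1, r2) = -f*H + 2*f*(f1 + f2)*( f^2/(r2 - r1) + 2*f*f2 - f1*f2*(r2 - r1) ), where f = -(r1*r2)^(-α/2), f1 = (α/2)*(r1*r2)^(-α/2)/r1, f2 = (α/2)*(r1*r2)^(-α/2)/r2, f11 = -(α/2)*(α/2 + 1)*(r1*r2)^(-α/2)/r1^2, f22 = -(α/2)*(α/2 + 1)*(r1*r2)^(-α/2)/r2^2, f12 = -(α^2/4)*(r1*r2)^(-α/2)/(r1*r2), g1 = f - f1*(r2 - r1), g2 = -f - f2*(r2 - r1), and H = f11*g2^2 - 2*f12*g1*g2 + f22*g1^2. -/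
/-- The gradient coefficient `Q2` for the flow by `K^(α/2)`. -/
noncomputable def Q2K (α r1 r2 : ℝ) : ℝ :=
  -fK α r1 r2 * HK α r1 r2 +
    2 * fK α r1 r2 * (f1K α r1 r2 + f2K α r1 r2) *
      (fK α r1 r2 ^ 2 / (r2 - r1) + 2 * fK α r1 r2 * f2K α r1 r2 -
        f1K α r1 r2 * f2K α r1 r2 * (r2 - r1))

/-- `Q2/α` is a quadratic function of `α` with non-negative leading coefficient. -/
theorem Q2_quadratic_in_alpha (r1 r2 : ℝ) (hr1 : 0 < r1) (hr12 : r1 < r2) :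
    ∃ a b c : ℝ, 0 ≤ c ∧ ∀ α : ℝ, 0 < α →
      (r1 * r2) ^ (2 * α) * Q2K α r1 r2 = α * (a + b * α + c * α ^ 2) := by
  have hr2 : 0 < r2 := hr1.trans hr12
  have hd : 0 < r2 - r1 := sub_pos.mpr hr12
  refine ⟨(r1 ^ 3 - 3 * r1 ^ 2 * r2 - r1 * r2 ^ 2 - r2 ^ 3) / (2 * r1 ^ 2 * r2 ^ 2 * (r2 - r1)),
    (-5 * r1 ^ 3 + 7 * r1 ^ 2 * r2 - 3 * r1 * r2 ^ 2 + r2 ^ 3) / (4 * r1 ^ 2 * r2 ^ 2 * (r2 - r1)),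
    (r2 - r1) / (2 * r1 * r2 ^ 2), ?_, ?_⟩
  · positivity
  intro α hα
  have h12 : (0:ℝ) < r1 * r2 := mul_pos hr1 hr2
  set p : ℝ := (r1 * r2) ^ (-(α / 2)) with hp
  have hkey : (r1 * r2) ^ (2 * α) * p ^ 4 = 1 := by
    rw [hp, ← Real.rpow_natCast ((r1 * r2) ^ (-(α / 2))) 4, ← Real.rpow_mul h12.le,
      ← Real.rpow_add h12, show 2 * α + -(α / 2) * (4:ℕ) = 0 by push_cast; ring,
      Real.rpow_zero]
  have hQ : Q2K α r1 r2 = p ^ 4 *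
      (α * ((r1 ^ 3 - 3 * r1 ^ 2 * r2 - r1 * r2 ^ 2 - r2 ^ 3) / (2 * r1 ^ 2 * r2 ^ 2 * (r2 - r1))
        + (-5 * r1 ^ 3 + 7 * r1 ^ 2 * r2 - 3 * r1 * r2 ^ 2 + r2 ^ 3) /
            (4 * r1 ^ 2 * r2 ^ 2 * (r2 - r1)) * α
        + (r2 - r1) / (2 * r1 * r2 ^ 2) * α ^ 2)) := by
    simp only [Q2K, HK, fK, f1K, f2K, f11K, f22K, f12K, g1K, g2K, ← hp]
    field_simp
    ring
  rw [hQ, ← mul_assoc, hkey, one_mul]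
end

section
/- Non-positivity of the gradient term Q1 for powers of Gauss curvature: for every real α with 1 ≤ α ≤ 2 and all real numbers 0 < r1 < r2, the quantity Q1 = f*H + 2*f*(f1 + f2)*( f^2/(r2 - r1) - 2*f*f1 - f1*f2*(r2 - r1) ) is non-positive, where f = -(r1*r2)^(-α/2), f1 = (α/2)*(r1*r2)^(-α/2)/r1, f2 = (α/2)*(r1*r2)^(-α/2)/r2, f11 = -(α/2)*(α/2 + 1)*(r1*r2)^(-α/2)/r1^2, f22 = -(α/2)*(α/2 + 1)*(r1*r2)^(-α/2)/r2^2, f12 = -(α^2/4)*(r1*r2)^(-α/2)/(r1*r2), g1 = f - f1*(r2 - r1), g2 = -f - f2*(r2 - r1), and H = f11*g2^2 - 2*f12*g1*g2 + f22*g1^2. -/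
/-- Non-positivity of the gradient term `Q1` for the flow by `K^(α/2)`,
`1 ≤ α ≤ 2`. -/
theorem Q1_nonpos (α r1 r2 : ℝ) (hα1 : 1 ≤ α) (hα2 : α ≤ 2)
    (hr1 : 0 < r1) (hr12 : r1 < r2) :
    Q1K α r1 r2 ≤ 0 := by
  have hr2 : 0 < r2 := hr1.trans hr12
  have hd : 0 < r2 - r1 := by linarith
  set p : ℝ := (r1 * r2) ^ (-(α / 2)) with hp_def
  have hp : 0 < p := Real.rpow_pos_of_pos (mul_pos hr1 hr2) _
  set a : ℝ := α / 2 with ha_def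
  have ha1 : (1:ℝ)/2 ≤ a := by rw [ha_def]; linarith
  have ha2 : a ≤ 1 := by rw [ha_def]; linarith
  set d : ℝ := r2 - r1 with hd_def
  set E : ℝ := a * (4 * r1 ^ 3 + 4 * (1 + a) * r1 ^ 2 * d +
      4 * a * (2 - a) * r1 * d ^ 2 + (4 * a - 1) * (1 - a) * d ^ 3) with hE_def
  have hE : 0 ≤ E := by
    have h1 : 0 ≤ 4 * a * (2 - a) * r1 * d ^ 2 := by
      have h : 0 ≤ 4 * a * (2 - a) := by nlinarith
      exact mul_nonneg (mul_nonneg h hr1.le) (sq_nonneg d)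
    have h2 : 0 ≤ (4 * a - 1) * (1 - a) * d ^ 3 := by
      have h : 0 ≤ (4 * a - 1) * (1 - a) := by nlinarith
      exact mul_nonneg h (by positivity)
    have h3 : 0 ≤ 4 * (1 + a) * r1 ^ 2 * d := by positivity
    nlinarith [pow_pos hr1 3]
  have hkey : Q1K α r1 r2 * (r1 ^ 2 * r2 ^ 2 * d) = -(p ^ 2) ^ 2 * E := by
    rw [hE_def, hd_def]
    simp only [Q1K, HK, fK, f1K, f2K, f11K, f22K, f12K, g1K, g2K, ← hp_def, ← ha_def]
    have h1 : r1 ≠ 0 := hr1.ne'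
    have h2 : r2 ≠ 0 := hr2.ne'
    have h3 : r2 - r1 ≠ 0 := hd.ne'
    field_simp
    ring
  have hpos : 0 < r1 ^ 2 * r2 ^ 2 * d := by positivity
  have hle : Q1K α r1 r2 * (r1 ^ 2 * r2 ^ 2 * d) ≤ 0 := by
    rw [hkey]
    have : 0 ≤ (p ^ 2) ^ 2 * E := by positivity
    linarith
  rw [mul_comm] at hle
  exact nonpos_of_mul_nonpos_right hle hpos
end

section
/- Non-positivity of the gradient term Q2 for powers of Gauss curvature: for every real α with 1 ≤ α ≤ 2 and all real numbers 0 < r1 < r2, the quantity Q2 = -f*H + 2*f*(f1 + f2)*( f^2/(r2 - r1) + 2*f*f2 - f1*f2*(r2 - r1) ) is non-positive, where f = -(r1*r2)^(-α/2), f1 = (α/2)*(r1*r2)^(-α/2)/r1, f2 = (α/2)*(r1*r2)^(-α/2)/r2, f11 = -(α/2)*(α/2 + 1)*(r1*r2)^(-α/2)/r1^2, f22 = -(α/2)*(α/2 + 1)*(r1*r2)^(-α/2)/r2^2, f12 = -(α^2/4)*(r1*r2)^(-α/2)/(r1*r2), g1 = f - f1*(r2 - r1), g2 = -f - f2*(r2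 - r1), and H = f11*g2^2 - 2*f12*g1*g2 + f22*g1^2. -/
/-- Non-positivity of the gradient term `Q2` for the flow by `K^(α/2)`,
`1 ≤ α ≤ 2`. -/
theorem Q2_nonpos (α r1 r2 : ℝ) (hα1 : 1 ≤ α) (hα2 : α ≤ 2)
    (hr1 : 0 < r1) (hr12 : r1 < r2) :
    Q2K α r1 r2 ≤ 0 := by
  have hr2 : 0 < r2 := hr1.trans hr12
  have hs : 0 < r2 - r1 := sub_pos.mpr hr12
  set p : ℝ := (r1 * r2) ^ (-(α / 2)) with hpdef
  have hp : 0 < p := Real.rpow_pos_of_pos (mul_pos hr1 hr2) _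
  have key : Q2K α r1 r2 =
      -(α / 2) * p ^ 4 *
        (4 * r1 ^ 3 + (8 - 2 * α) * r1 ^ 2 * (r2 - r1) +
          (4 - α ^ 2) * r1 * (r2 - r1) ^ 2 + (2 - α) / 2 * (r2 - r1) ^ 3) /
        ((r2 - r1) * r1 ^ 2 * r2 ^ 2) := by
    unfold Q2K HK g1K g2K fK f1K f2K f11K f22K f12K
    rw [← hpdef]
    field_simp
    ring
  rw [key]
  apply div_nonpos_of_nonpos_of_nonneg
  · apply mul_nonpos_of_nonpos_of_nonneg
    · have : 0 < α / 2 := by linarith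
      nlinarith [pow_pos hp 4]
    · have h1 : (0:ℝ) ≤ 8 - 2 * α := by linarith
      have h2 : (0:ℝ) ≤ 4 - α ^ 2 := by nlinarith
      have h3 : (0:ℝ) ≤ (2 - α) / 2 := by linarith
      have := hs.le
      positivity
  · positivity
end

section
/- Non-positivity of the explicit numerator of Q1 for α in [1/2, 2]: for every real α with 1/2 ≤ α ≤ 2 and all real numbers 0 < r1 < r2, (2*α^2 - 5*α + 2)*r1^2*r2^3 - (4*α^2 - 7*α + 6)*r1^3*r2^2 + (2*α^2 - 3*α - 2)*r1^4*r2 + (α - 2)*r1^5 ≤ 0. -/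
/-- Non-positivity of the explicit numerator of `Q1` for `α ∈ [1/2, 2]`. -/
theorem Q1_numerator_nonpos (α r1 r2 : ℝ) (hα1 : 1 / 2 ≤ α) (hα2 : α ≤ 2)
    (hr1 : 0 < r1) (hr12 : r1 < r2) :
    (2 * α ^ 2 - 5 * α + 2) * r1 ^ 2 * r2 ^ 3 - (4 * α ^ 2 - 7 * α + 6) * r1 ^ 3 * r2 ^ 2 +
      (2 * α ^ 2 - 3 * α - 2) * r1 ^ 4 * r2 + (α - 2) * r1 ^ 5 ≤ 0 := by
  have ht : (0:ℝ) ≤ r2 - r1 := by linarith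
  have ha : (0:ℝ) ≤ 2 * α - 1 := by linarith
  have hb : (0:ℝ) ≤ 2 - α := by linarith
  have hc : (0:ℝ) ≤ α := by linarith
  have hd : (0:ℝ) ≤ 4 - α := by linarith
  have h1 : 0 ≤ r1 ^ 2 * ((2 * α - 1) * (2 - α) * (r2 - r1) ^ 3) :=
    mul_nonneg (by positivity) (mul_nonneg (mul_nonneg ha hb) (by positivity))
  have h2 : 0 ≤ r1 ^ 2 * (α * (4 - α) * r1 * (r2 - r1) ^ 2) :=
    mul_nonneg (by positivity) (mul_nonneg (mul_nonneg (mul_nonneg hc hd) hr1.le) (by positivity))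
  have h3 : 0 ≤ r1 ^ 2 * ((4 * α + 8) * r1 ^ 2 * (r2 - r1)) :=
    mul_nonneg (by positivity) (mul_nonneg (mul_nonneg (by linarith) (by positivity)) ht)
  have h4 : (0:ℝ) < r1 ^ 5 := by positivity
  nlinarith [h1, h2, h3, h4]
end

section
/- Non-positivity of the explicit numerator of Q2 for α in [1/2, 2]: for every real α with 1/2 ≤ α ≤ 2 and all real numbers 0 < r1 < r2, (2*α^2 - 5*α + 2)*r2^2*r1^3 - (4*α^2 - 7*α + 6)*r2^3*r1^2 + (2*α^2 - 3*α - 2)*r2^4*r1 + (α - 2)*r2^5 ≤ 0. -/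
/-- Non-positivity of the explicit numerator of `Q2` for `α ∈ [1/2, 2]`. -/
theorem Q2_numerator_nonpos (α r1 r2 : ℝ) (hα1 : 1 / 2 ≤ α) (hα2 : α ≤ 2)
    (hr1 : 0 < r1) (hr12 : r1 < r2) :
    (2 * α ^ 2 - 5 * α + 2) * r2 ^ 2 * r1 ^ 3 - (4 * α ^ 2 - 7 * α + 6) * r2 ^ 3 * r1 ^ 2 +
      (2 * α ^ 2 - 3 * α - 2) * r2 ^ 4 * r1 + (α - 2) * r2 ^ 5 ≤ 0 := by
  have hs : (0:ℝ) < r2 - r1 := sub_pos.2 hr12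
  have h2a : (0:ℝ) ≤ 2 - α := by linarith
  have t1 : 0 ≤ (2 - α) * (r2 - r1) ^ 5 := mul_nonneg h2a (by positivity)
  have t2 : 0 ≤ (12 - 2*α - 2*α^2) * (r1 * (r2 - r1) ^ 4) := by
    apply mul_nonneg _ (by positivity)
    nlinarith [sq_nonneg α]
  have t3 : 0 ≤ (34 - 5*α - 4*α^2) * (r1^2 * (r2 - r1) ^ 3) := by
    apply mul_nonneg _ (by positivity)
    nlinarith [sq_nonneg α]
  have t4 : 0 ≤ (48 - 8*α - 2*α^2) * (r1^3 * (r2 - r1) ^ 2) := by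
    apply mul_nonneg _ (by positivity)
    nlinarith [sq_nonneg α]
  have t5 : 0 ≤ (32 - 4*α) * (r1^4 * (r2 - r1)) := by
    apply mul_nonneg (by linarith) (by positivity)
  have t6 : (0:ℝ) ≤ 8 * r1^5 := by positivity
  nlinarith [t1, t2, t3, t4, t5, t6]
end

section
/- Failure of the pinching estimate for α > 2: for every real α > 2, there exist real numbers 0 < r1 < r2 such that (2*α^2 - 5*α + 2)*r2^2*r1^3 - (4*α^2 - 7*α + 6)*r2^3*r1^2 + (2*α^2 - 3*α - 2)*r2^4*r1 + (α - 2)*r2^5 > 0. -/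
/-! For `α > 2` the coefficients of `r2^2 r1^3`, `r2^4 r1` and `r2^5` are nonnegative, nonnegative
and positive (`2α² - 5α + 2 = (2α - 1)(α - 2)`, `2α² - 3α - 2 = (2α + 1)(α - 2)`), so at `r1 = 1`
the only negative term `-(4α² - 7α + 6) r2^3` is beaten by `(α - 2) r2^5` once `r2` is large. -/

lemma exists_one_lt_lt_mul_sq (B : ℝ) {c : ℝ} (hc : 0 < c) : ∃ t : ℝ, 1 < t ∧ B < c * t ^ 2 := by
  have hBc : 0 ≤ |B| / c := div_nonneg (abs_nonneg B) hc.le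
  refine ⟨|B| / c + 2, by linarith, ?_⟩
  have hct : c * (|B| / c + 2) = |B| + 2 * c := by field_simp
  calc B ≤ |B| := le_abs_self B
    _ < (|B| + 2 * c) * (|B| / c + 2) := by nlinarith [abs_nonneg B]
    _ = c * (|B| / c + 2) ^ 2 := by rw [← hct]; ring

lemma exists_lt_and_quintic_form_pos {a b c : ℝ} (B : ℝ) (ha : 0 ≤ a) (hb : 0 ≤ b) (hc : 0 < c) :
    ∃ r1 r2 : ℝ, 0 < r1 ∧ r1 < r2 ∧
      a * r2 ^ 2 * r1 ^ 3 - B * r2 ^ 3 * r1 ^ 2 + b * r2 ^ 4 * r1 + c * r2 ^ 5 > 0 := by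
  obtain ⟨t, ht, hBt⟩ := exists_one_lt_lt_mul_sq B hc
  refine ⟨1, t, one_pos, ht, ?_⟩
  have ht0 : 0 < t := one_pos.trans ht
  have hdom : 0 < t ^ 3 * (c * t ^ 2 - B) := mul_pos (pow_pos ht0 3) (sub_pos.mpr hBt)
  have ha' : 0 ≤ a * t ^ 2 := by positivity
  have hb' : 0 ≤ b * t ^ 4 := by positivity
  linear_combination hdom + ha' + hb'

/-- Failure of the pinching estimate for `α > 2`: the numerator of `Q2` can be
positive. -/
theorem Q2_numerator_pos_of_alpha_gt_two (α : ℝ) (hα : 2 < α) :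
    ∃ r1 r2 : ℝ, 0 < r1 ∧ r1 < r2 ∧
      (2 * α ^ 2 - 5 * α + 2) * r2 ^ 2 * r1 ^ 3 - (4 * α ^ 2 - 7 * α + 6) * r2 ^ 3 * r1 ^ 2 +
        (2 * α ^ 2 - 3 * α - 2) * r2 ^ 4 * r1 + (α - 2) * r2 ^ 5 > 0 := by
  have hc : 0 < α - 2 := sub_pos.mpr hα
  have ha : 0 ≤ 2 * α ^ 2 - 5 * α + 2 := by nlinarith
  have hb : 0 ≤ 2 * α ^ 2 - 3 * α - 2 := by nlinarith
  exact exists_lt_and_quintic_form_pos _ ha hb hc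
end

section
/- Failure of non-positivity for 0 < α < 1/2: for every real α with 0 < α < 1/2, there exist real numbers 0 < r1 < r2 such that (2*α^2 - 5*α + 2)*r1^2*r2^3 - (4*α^2 - 7*α + 6)*r1^3*r2^2 + (2*α^2 - 3*α - 2)*r1^4*r2 + (α - 2)*r1^5 > 0. -/
/-!
With `r1 = 1` the numerator is a cubic in `r2` with leading coefficient
`2α^2 - 5α + 2 = (2α - 1)(α - 2)`, which is positive for `α < 1/2`; such a cubic tends to `+∞`,
so it is positive at some `r2 > 1`.
-/

open Filter Polynomial

namespace Cubic

theorem tendsto_eval_toPoly_atTop {P : Cubic ℝ} (ha : 0 < P.a) :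
    Tendsto (fun x => P.toPoly.eval x) atTop atTop :=
  P.toPoly.tendsto_atTop_of_leadingCoeff_nonneg
    (by rw [P.degree_of_a_ne_zero ha.ne']; decide)
    (by rw [P.leadingCoeff_of_a_ne_zero ha.ne']; exact ha.le)

theorem exists_gt_eval_toPoly_pos {P : Cubic ℝ} (ha : 0 < P.a) (x₀ : ℝ) :
    ∃ x, x₀ < x ∧ 0 < P.toPoly.eval x :=
  ((eventually_gt_atTop x₀).and ((tendsto_eval_toPoly_atTop ha).eventually_gt_atTop 0)).exists

end Cubic

theorem Q1_numerator_pos_of_alpha_lt_half_general (α : ℝ) (hα : α < 1 / 2) :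
    ∃ r1 r2 : ℝ, 0 < r1 ∧ r1 < r2 ∧
      (2 * α ^ 2 - 5 * α + 2) * r1 ^ 2 * r2 ^ 3 - (4 * α ^ 2 - 7 * α + 6) * r1 ^ 3 * r2 ^ 2 +
        (2 * α ^ 2 - 3 * α - 2) * r1 ^ 4 * r2 + (α - 2) * r1 ^ 5 > 0 := by
  have hlead : 0 < 2 * α ^ 2 - 5 * α + 2 := by nlinarith
  obtain ⟨r2, hr2, hpos⟩ := Cubic.exists_gt_eval_toPoly_pos
    (P := ⟨2 * α ^ 2 - 5 * α + 2, -(4 * α ^ 2 - 7 * α + 6), 2 * α ^ 2 - 3 * α - 2, α - 2⟩) hlead 1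
  refine ⟨1, r2, one_pos, hr2, ?_⟩
  simp only [Cubic.toPoly, eval_add, eval_mul, eval_C, eval_pow, eval_X] at hpos
  linarith

/-- Failure of non-positivity of the numerator of `Q1` for `0 < α < 1/2`. -/
theorem Q1_numerator_pos_of_alpha_lt_half (α : ℝ) (hα0 : 0 < α) (hα : α < 1 / 2) :
    ∃ r1 r2 : ℝ, 0 < r1 ∧ r1 < r2 ∧
      (2 * α ^ 2 - 5 * α + 2) * r1 ^ 2 * r2 ^ 3 - (4 * α ^ 2 - 7 * α + 6) * r1 ^ 3 * r2 ^ 2 +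
        (2 * α ^ 2 - 3 * α - 2) * r1 ^ 4 * r2 + (α - 2) * r1 ^ 5 > 0 :=
  Q1_numerator_pos_of_alpha_lt_half_general α hα
end

section
/- Simplification of Q1 and Q2 by cancellation of second-derivative terms: let r1 ≠ r2 and f, f1, f2, f11, f12, f22 be real numbers; set g1 = f - f1*(r2 - r1), g2 = -f - f2*(r2 - r1), g11 = 2*f1 - f11*(r2 - r1), g12 = f2 - f1 - f12*(r2 - r1), g22 = -2*f2 - f22*(r2 - r1), H = f11*g2^2 - 2*f12*g1*g2 + f22*g1^2, and Hg = g11*g2^2 - 2*g12*g1*g2 + g22*g1^2. Then g1*H - f1*Hg + 2*g1^2*(g1*f2 - g2*f1)/(r2 - r1) = f*H + 2*f*(f1 + f2)*( f^2/(r2 - r1) - 2*f*f1 - f1*f2*(r2 - r1) ), and g2*H - f2*Hg + 2*g2^2*(g1*f2 - g2*f1)/(r2 - r1) = -f*H + 2*f*(f1 + f2)*( f^2/(r2 - r1) + 2*f*f2 - f1*f2*(r2 - r1) ). -/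
/-- Simplification of `Q1` and `Q2` by cancellation of the terms involving the
second derivatives of the speed `f`. -/
theorem Q1_Q2_simplification
    (r1 r2 f f1 f2 f11 f12 f22 g1 g2 g11 g12 g22 H Hg : ℝ)
    (hr : r1 ≠ r2)
    (hg1 : g1 = f - f1 * (r2 - r1)) (hg2 : g2 = -f - f2 * (r2 - r1))
    (hg11 : g11 = 2 * f1 - f11 * (r2 - r1))
    (hg12 : g12 = f2 - f1 - f12 * (r2 - r1))
    (hg22 : g22 = -2 * f2 - f22 * (r2 - r1))
    (hH : H = f11 * g2 ^ 2 - 2 * f12 * g1 * g2 + f22 * g1 ^ 2)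
    (hHg : Hg = g11 * g2 ^ 2 - 2 * g12 * g1 * g2 + g22 * g1 ^ 2) :
    g1 * H - f1 * Hg + 2 * g1 ^ 2 * (g1 * f2 - g2 * f1) / (r2 - r1) =
      f * H + 2 * f * (f1 + f2) *
        (f ^ 2 / (r2 - r1) - 2 * f * f1 - f1 * f2 * (r2 - r1)) ∧
    g2 * H - f2 * Hg + 2 * g2 ^ 2 * (g1 * f2 - g2 * f1) / (r2 - r1) =
      -f * H + 2 * f * (f1 + f2) *
        (f ^ 2 / (r2 - r1) + 2 * f * f2 - f1 * f2 * (r2 - r1)) := by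
  subst hg1 hg2 hg11 hg12 hg22 hH hHg
  have hd : r2 - r1 ≠ 0 := sub_ne_zero.mpr (Ne.symm hr)
  constructor <;> field_simp <;> ring
end
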